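/- arXiv:2602.03465 — 3 statements merged into one kernel-verified Lean document; each statement's English description precedes it below -/
import Mathlib

section
/- Let d ≥ 1, R ≥ 1 and N > d + 1, and set φ_R(x) = R^d (1 + R|x|)^{−N}. Let μ be a positive finite Borel measure on ℝ^d supported in the unit ball B(0,1) and satisfying the Frostman condition μ(B(x,r)) ≤ C r^b for all x ∈ ℝ^d and r > 0, for some 0 < b ≤ d. Then there is a constant C', independent of R, such that for every t ∈ [1,2] and every x ∈ ℝ^d, |(φ_R ∗ μ_t)(x)| ≤ C' R^{d−b} (1 + |x|)^{−N+d+1}. -/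
open MeasureTheory Real Set Metric FourierTransform
open scoped ENNReal NNReal RealInnerProductSpace

noncomputable section

variable {d : ℕ}

/-- Fourier transform of a finite Borel measure on ℝ^d:  μ̂(ξ) = ∫ e^{−2πi x·ξ} dμ(x). -/
def mFT (μ : Measure (EuclideanSpace ℝ (Fin d))) (ξ : EuclideanSpace ℝ (Fin d)) : ℂ :=
  ∫ x, Complex.exp (-(2 * (π : ℂ) * Complex.I * ((⟪x, ξ⟫ : ℝ) : ℂ))) ∂μ

/-- Convolution with the dilated measure: (f ∗ μ_t)(x) = ∫ f(x − t y) dμ(y). -/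
def convM (f : EuclideanSpace ℝ (Fin d) → ℂ) (μ : Measure (EuclideanSpace ℝ (Fin d)))
    (t : ℝ) (x : EuclideanSpace ℝ (Fin d)) : ℂ :=
  ∫ y, f (x - t • y) ∂μ

/-- Global maximal function M_μ f(x) = sup_{t>0} |(f ∗ μ_t)(x)|. -/
def Mmax (μ : Measure (EuclideanSpace ℝ (Fin d))) (f : EuclideanSpace ℝ (Fin d) → ℂ)
    (x : EuclideanSpace ℝ (Fin d)) : ℝ≥0∞ :=
  ⨆ t : {t : ℝ // 0 < t}, (‖convM f μ t x‖₊ : ℝ≥0∞)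

/-- Local maximal function M_μ^{loc} f(x) = sup_{t∈[1,2]} |(f ∗ μ_t)(x)|. -/
def MmaxLoc (μ : Measure (EuclideanSpace ℝ (Fin d))) (f : EuclideanSpace ℝ (Fin d) → ℂ)
    (x : EuclideanSpace ℝ (Fin d)) : ℝ≥0∞ :=
  ⨆ t : (Icc (1:ℝ) 2), (‖convM f μ t x‖₊ : ℝ≥0∞)

/-- L^p norm (in lintegral form) of an ℝ≥0∞-valued function on ℝ^d. -/
def lpE (g : EuclideanSpace ℝ (Fin d) → ℝ≥0∞) (p : ℝ) : ℝ≥0∞ :=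
  (∫⁻ x, g x ^ p) ^ (1 / p)

/-- Weak L^q quasinorm of an ℝ≥0∞-valued function on ℝ^d. -/
def wlpE (g : EuclideanSpace ℝ (Fin d) → ℝ≥0∞) (q : ℝ) : ℝ≥0∞ :=
  ⨆ l : ℝ≥0, (l : ℝ≥0∞) * (volume {x | (l : ℝ≥0∞) < g x}) ^ (1 / q)

/-- Lorentz L^{p,1} norm (up to a constant factor p) of a complex-valued function. -/
def lorentz1 (f : EuclideanSpace ℝ (Fin d) → ℂ) (p : ℝ) : ℝ≥0∞ :=
  ∫⁻ l in Ioi (0:ℝ), (volume {x | l < ‖f x‖}) ^ (1 / p)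

/-- Lorentz L^{p,r} quasinorm of a real-valued function,
‖f‖_{p,r} = ( ∫_0^∞ (λ · d_f(λ)^{1/p})^r dλ/λ )^{1/r}. -/
def lorentzR (f : EuclideanSpace ℝ (Fin d) → ℝ) (p r : ℝ) : ℝ≥0∞ :=
  (∫⁻ l in Ioi (0:ℝ),
      (ENNReal.ofReal l * (volume {x | l < |f x|}) ^ (1 / p)) ^ r / ENNReal.ofReal l) ^ (1 / r)

/-- Littlewood–Paley projection P_k for k ∈ ℤ: (P_k f)^(ξ) = β(2^{−k}|ξ|) f̂(ξ). -/
def Pproj (β : ℝ → ℝ) (k : ℤ) (f : EuclideanSpace ℝ (Fin d) → ℂ)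
    (x : EuclideanSpace ℝ (Fin d)) : ℂ :=
  ∫ ξ, Complex.exp (2 * (π : ℂ) * Complex.I * ((⟪x, ξ⟫ : ℝ) : ℂ)) *
    ((β ((2:ℝ) ^ (-k) * ‖ξ‖) : ℝ) : ℂ) * 𝓕 f ξ

/-- The multiplier operator T_j^t, with multiplier m_j(tξ) = μ̂(tξ) β(2^{−j}|tξ|). -/
def Tj (μ : Measure (EuclideanSpace ℝ (Fin d))) (β : ℝ → ℝ) (j : ℕ) (t : ℝ)
    (f : EuclideanSpace ℝ (Fin d) → ℂ) (x : EuclideanSpace ℝ (Fin d)) : ℂ :=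
  ∫ ξ, Complex.exp (2 * (π : ℂ) * Complex.I * ((⟪x, ξ⟫ : ℝ) : ℂ)) *
    (((β ((2:ℝ) ^ (-(j:ℤ)) * ‖t • ξ‖) : ℝ) : ℂ) * mFT μ (t • ξ)) * 𝓕 f ξ

/-- The maximal multiplier operator T_j^* f(x) = sup_{t>0} |T_j^t f(x)|. -/
def TjStar (μ : Measure (EuclideanSpace ℝ (Fin d))) (β : ℝ → ℝ) (j : ℕ)
    (f : EuclideanSpace ℝ (Fin d) → ℂ) (x : EuclideanSpace ℝ (Fin d)) : ℝ≥0∞ :=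
  ⨆ t : {t : ℝ // 0 < t}, (‖Tj μ β j t f x‖₊ : ℝ≥0∞)

/-- M_j f(x) = sup_{k∈ℤ} sup_{2^{−k} ≤ t < 2^{−k+1}} |(P_{k+j} f ∗ μ_t)(x)|. -/
def Mj (μ : Measure (EuclideanSpace ℝ (Fin d))) (β : ℝ → ℝ) (j : ℕ)
    (f : EuclideanSpace ℝ (Fin d) → ℂ) (x : EuclideanSpace ℝ (Fin d)) : ℝ≥0∞ :=
  ⨆ k : ℤ, ⨆ t : (Ico ((2:ℝ) ^ (-k)) ((2:ℝ) ^ (-k+1))),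
    (‖convM (Pproj β (k + j) f) μ t x‖₊ : ℝ≥0∞)

/-- P_j(μ_t ∗ μ̄_s)(x) = ∫ e^{2πi x·ξ} β(2^{−j}|ξ|) μ̂(tξ) conj(μ̂(sξ)) dξ. -/
def Kdisp (μ : Measure (EuclideanSpace ℝ (Fin d))) (β : ℝ → ℝ) (j : ℕ) (t s : ℝ)
    (x : EuclideanSpace ℝ (Fin d)) : ℂ :=
  ∫ ξ, Complex.exp (2 * (π : ℂ) * Complex.I * ((⟪x, ξ⟫ : ℝ) : ℂ)) *
    ((β ((2:ℝ) ^ (-(j:ℤ)) * ‖ξ‖) : ℝ) : ℂ) * (mFT μ (t • ξ) * (starRingEnd ℂ) (mFT μ (s • ξ)))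

/-- Convolution of a nonnegative function with a dilated measure, valued in [0,∞]. -/
def convNN (g : EuclideanSpace ℝ (Fin d) → ℝ) (σ : Measure (EuclideanSpace ℝ (Fin d)))
    (t : ℝ) (x : EuclideanSpace ℝ (Fin d)) : ℝ≥0∞ :=
  ∫⁻ y, ENNReal.ofReal (g (x - t • y)) ∂σ

set_option maxHeartbeats 1000000 in
/-- Convolution bound under the Frostman condition: for φ_R(x) = R^d(1+R|x|)^{−N} and μ
supported in the unit ball with μ(B(x,r)) ≤ C r^b, one has
|(φ_R ∗ μ_t)(x)| ≤ C' R^{d−b}(1+|x|)^{−N+d+1} for t ∈ [1,2], uniformly in R ≥ 1. -/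
theorem stmt9 (d : ℕ) (hd : 1 ≤ d) (N : ℝ) (hN : (d:ℝ) + 1 < N)
    (μ : Measure (EuclideanSpace ℝ (Fin d))) [IsFiniteMeasure μ]
    (hsupp : μ (ball (0 : EuclideanSpace ℝ (Fin d)) 1)ᶜ = 0)
    (C b : ℝ) (hb1 : 0 < b) (hb2 : b ≤ d)
    (hfrostman : ∀ (x : EuclideanSpace ℝ (Fin d)) (r : ℝ), 0 < r →
      μ (ball x r) ≤ ENNReal.ofReal (C * r ^ b)) :
    ∃ C' : ℝ, 0 < C' ∧ ∀ R : ℝ, 1 ≤ R → ∀ t ∈ Icc (1:ℝ) 2, ∀ x : EuclideanSpace ℝ (Fin d),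
      |∫ y, R ^ (d:ℝ) * (1 + R * ‖x - t • y‖) ^ (-N) ∂μ| ≤
        C' * R ^ ((d:ℝ) - b) * (1 + ‖x‖) ^ (-N + (d:ℝ) + 1) := by
  have hNpos : (0:ℝ) < N := lt_trans (by positivity) hN
  have hbN : b < N := lt_of_le_of_lt hb2 (by linarith)
  set C₁ : ℝ := max C 1 with hC₁def
  have hC₁pos : (0:ℝ) < C₁ := lt_of_lt_of_le one_pos (le_max_right _ _)
  have frost : ∀ (z : EuclideanSpace ℝ (Fin d)) (r : ℝ), 0 < r →
      μ (ball z r) ≤ ENNReal.ofReal (C₁ * r ^ b) := by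
    intro z r hr
    refine (hfrostman z r hr).trans (ENNReal.ofReal_le_ofReal ?_)
    exact mul_le_mul_of_nonneg_right (le_max_left _ _) (Real.rpow_nonneg hr.le b)
  set q : ℝ := (2:ℝ) ^ (b - N) with hqdef
  have hqpos : (0:ℝ) < q := Real.rpow_pos_of_pos two_pos _
  have hq1 : q < 1 := Real.rpow_lt_one_of_one_lt_of_neg one_lt_two (by linarith)
  have h1q : (0:ℝ) < 1 - q := by linarith
  set K : ℝ := (2:ℝ) ^ N * C₁ * (1 - q)⁻¹ + (4:ℝ) ^ N * C₁ with hKdef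
  have hKpos : (0:ℝ) < K := by positivity
  have h5pos : (0:ℝ) < (5:ℝ) ^ (N - (d:ℝ) - 1) := by positivity
  have h5ge1 : (1:ℝ) ≤ (5:ℝ) ^ (N - (d:ℝ) - 1) :=
    Real.one_le_rpow (by norm_num) (by linarith)
  refine ⟨K * (5:ℝ) ^ (N - (d:ℝ) - 1), by positivity, ?_⟩
  intro R hR t ht x
  have hRpos : (0:ℝ) < R := lt_of_lt_of_le one_pos hR
  have ht1 : (1:ℝ) ≤ t := ht.1
  have ht2 : t ≤ 2 := ht.2
  have htpos : (0:ℝ) < t := lt_of_lt_of_le one_pos ht1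
  set f : EuclideanSpace ℝ (Fin d) → ℝ :=
    fun y => R ^ (d:ℝ) * (1 + R * ‖x - t • y‖) ^ (-N) with hfdef
  have hbase : ∀ y : EuclideanSpace ℝ (Fin d), (0:ℝ) < 1 + R * ‖x - t • y‖ := by
    intro y; positivity
  have hf0 : ∀ y, 0 ≤ f y := by
    intro y
    have := hbase y
    positivity
  -- total mass bound
  have hμuniv : μ univ ≤ ENNReal.ofReal C₁ := by
    have h1 : μ univ ≤ μ (ball (0 : EuclideanSpace ℝ (Fin d)) 1) +
        μ (ball (0 : EuclideanSpace ℝ (Fin d)) 1)ᶜ := by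
      rw [← union_compl_self (ball (0 : EuclideanSpace ℝ (Fin d)) 1)]
      exact measure_union_le _ _
    rw [hsupp, add_zero] at h1
    refine h1.trans ((frost 0 1 one_pos).trans ?_)
    simp [Real.one_rpow]
  -- reduce to a lintegral bound
  have habs : |∫ y, f y ∂μ| ≤ (∫⁻ y, ENNReal.ofReal (f y) ∂μ).toReal := by
    have h := norm_integral_le_lintegral_norm (μ := μ) f
    have he : (fun y => ENNReal.ofReal ‖f y‖) = fun y => ENNReal.ofReal (f y) := by
      funext y; rw [Real.norm_eq_abs, abs_of_nonneg (hf0 y)]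
    rwa [Real.norm_eq_abs, he] at h
  have hRHS0 : 0 ≤ K * (5:ℝ) ^ (N - (d:ℝ) - 1) * R ^ ((d:ℝ) - b) *
      (1 + ‖x‖) ^ (-N + (d:ℝ) + 1) := by positivity
  refine habs.trans (ENNReal.toReal_le_of_le_ofReal hRHS0 ?_)
  -- main lintegral bound
  rcases le_total 4 ‖x‖ with hx | hx
  · -- far case
    have hB : (0:ℝ) < R * (1 + ‖x‖) / 4 := by positivity
    have hptae : ∀ᵐ y ∂μ, ENNReal.ofReal (f y) ≤
        ENNReal.ofReal (R ^ (d:ℝ) * (R * (1 + ‖x‖) / 4) ^ (-N)) := by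
      have hae : ∀ᵐ y ∂μ, y ∈ ball (0 : EuclideanSpace ℝ (Fin d)) 1 := by
        rw [ae_iff]
        exact hsupp
      filter_upwards [hae] with y hy
      have hy1 : ‖y‖ < 1 := by simpa [mem_ball, dist_eq_norm] using hy
      have hty : ‖t • y‖ ≤ 2 := by
        rw [norm_smul, Real.norm_eq_abs, abs_of_pos htpos]
        nlinarith [norm_nonneg y]
      have hlow : ‖x‖ - 2 ≤ ‖x - t • y‖ := by
        have := norm_sub_norm_le x (t • y)
        linarith
      have hkey : R * (1 + ‖x‖) / 4 ≤ 1 + R * ‖x - t • y‖ := by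
        nlinarith [mul_le_mul_of_nonneg_left hlow hRpos.le,
          mul_le_mul_of_nonneg_left hx hRpos.le]
      refine ENNReal.ofReal_le_ofReal ?_
      exact mul_le_mul_of_nonneg_left
        (Real.rpow_le_rpow_of_nonpos hB hkey (by linarith)) (by positivity)
    calc ∫⁻ y, ENNReal.ofReal (f y) ∂μ
        ≤ ∫⁻ _, ENNReal.ofReal (R ^ (d:ℝ) * (R * (1 + ‖x‖) / 4) ^ (-N)) ∂μ :=
          lintegral_mono_ae hptae
      _ = ENNReal.ofReal (R ^ (d:ℝ) * (R * (1 + ‖x‖) / 4) ^ (-N)) * μ univ :=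
          lintegral_const _
      _ ≤ ENNReal.ofReal (R ^ (d:ℝ) * (R * (1 + ‖x‖) / 4) ^ (-N)) *
          ENNReal.ofReal C₁ := mul_le_mul' le_rfl hμuniv
      _ = ENNReal.ofReal (R ^ (d:ℝ) * (R * (1 + ‖x‖) / 4) ^ (-N) * C₁) := by
          rw [← ENNReal.ofReal_mul (by positivity)]
      _ ≤ ENNReal.ofReal (K * (5:ℝ) ^ (N - (d:ℝ) - 1) * R ^ ((d:ℝ) - b) *
          (1 + ‖x‖) ^ (-N + (d:ℝ) + 1)) := by
          refine ENNReal.ofReal_le_ofReal ?_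
          have hsplit : (R * (1 + ‖x‖) / 4) ^ (-N) =
              (4:ℝ) ^ N * (R ^ (-N) * (1 + ‖x‖) ^ (-N)) := by
            have h4 : ((4:ℝ))⁻¹ ^ (-N) = (4:ℝ) ^ N := by
              rw [Real.inv_rpow (by norm_num : (0:ℝ) ≤ 4),
                Real.rpow_neg (by norm_num : (0:ℝ) ≤ 4), inv_inv]
            rw [show R * (1 + ‖x‖) / 4 = R * ((1 + ‖x‖) * (4:ℝ)⁻¹) by ring]
            rw [Real.mul_rpow hRpos.le (by positivity),
              Real.mul_rpow (by positivity) (by norm_num), h4]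
            ring
          rw [hsplit]
          have e1 : R ^ (d:ℝ) * R ^ (-N) = R ^ ((d:ℝ) - N) := by
            rw [← Real.rpow_add hRpos]; ring_nf
          calc R ^ (d:ℝ) * ((4:ℝ) ^ N * (R ^ (-N) * (1 + ‖x‖) ^ (-N))) * C₁
              = ((4:ℝ) ^ N * C₁) * (R ^ (d:ℝ) * R ^ (-N)) * (1 + ‖x‖) ^ (-N) := by ring
            _ = ((4:ℝ) ^ N * C₁) * R ^ ((d:ℝ) - N) * (1 + ‖x‖) ^ (-N) := by rw [e1]
            _ ≤ (K * (5:ℝ) ^ (N - (d:ℝ) - 1)) * R ^ ((d:ℝ) - b) *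
                (1 + ‖x‖) ^ (-N + (d:ℝ) + 1) := by
                have hK4 : (4:ℝ) ^ N * C₁ ≤ K * (5:ℝ) ^ (N - (d:ℝ) - 1) := by
                  have hA : (0:ℝ) < (2:ℝ) ^ N * C₁ * (1 - q)⁻¹ := by positivity
                  have h4K : (4:ℝ) ^ N * C₁ ≤ K := by rw [hKdef]; linarith
                  have := mul_le_mul_of_nonneg_left h5ge1 hKpos.le
                  nlinarith
                have hRe : R ^ ((d:ℝ) - N) ≤ R ^ ((d:ℝ) - b) :=
                  Real.rpow_le_rpow_of_exponent_le hR (by linarith)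
                have hXe : (1 + ‖x‖) ^ (-N) ≤ (1 + ‖x‖) ^ (-N + (d:ℝ) + 1) :=
                  Real.rpow_le_rpow_of_exponent_le (by linarith [norm_nonneg x])
                    (by linarith [show (0:ℝ) ≤ (d:ℝ) from Nat.cast_nonneg d])
                have h1 : (0:ℝ) ≤ (4:ℝ) ^ N * C₁ := by positivity
                have h2 : (0:ℝ) ≤ R ^ ((d:ℝ) - N) := by positivity
                have h3 : (0:ℝ) ≤ (1 + ‖x‖) ^ (-N) := by positivity
                gcongr
  · -- near case
    classical
    set S : ℕ → Set (EuclideanSpace ℝ (Fin d)) :=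
      fun k => {y | ‖x - t • y‖ < 2 ^ k / R} with hSdef
    have hSm : ∀ k, MeasurableSet (S k) := by
      intro k
      have hc : Continuous fun y : EuclideanSpace ℝ (Fin d) => ‖x - t • y‖ :=
        (continuous_const.sub (continuous_id.const_smul t)).norm
      exact (isOpen_lt hc continuous_const).measurableSet
    set Ek : ℕ → ℝ≥0∞ :=
      fun k => ENNReal.ofReal ((2:ℝ) ^ N * R ^ (d:ℝ) * ((2:ℝ) ^ k) ^ (-N)) with hEdef
    have hpt : ∀ y, ENNReal.ofReal (f y) ≤ ∑' k, (S k).indicator (fun _ => Ek k) y := by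
      intro y
      have hex : ∃ k : ℕ, R * ‖x - t • y‖ < 2 ^ k :=
        pow_unbounded_of_one_lt (R * ‖x - t • y‖) one_lt_two
      set k₀ := Nat.find hex with hk₀def
      have hk0 : R * ‖x - t • y‖ < 2 ^ k₀ := Nat.find_spec hex
      have hyS : y ∈ S k₀ := by
        simp only [hSdef, mem_setOf_eq]
        rw [lt_div_iff₀ hRpos, mul_comm]
        exact hk0
      have hfb : f y ≤ (2:ℝ) ^ N * R ^ (d:ℝ) * ((2:ℝ) ^ k₀) ^ (-N) := by
        have hRd : (0:ℝ) < R ^ (d:ℝ) := by positivity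
        rcases Nat.eq_zero_or_pos k₀ with h0 | hposk
        · rw [h0]
          simp only [pow_zero, Real.one_rpow, mul_one]
          have h1 : (1 + R * ‖x - t • y‖) ^ (-N) ≤ 1 :=
            Real.rpow_le_one_of_one_le_of_nonpos
              (by nlinarith [norm_nonneg (x - t • y)]) (by linarith)
          have h2 : (1:ℝ) ≤ (2:ℝ) ^ N := Real.one_le_rpow one_le_two hNpos.le
          calc f y ≤ R ^ (d:ℝ) * 1 := mul_le_mul_of_nonneg_left h1 hRd.le
            _ = R ^ (d:ℝ) := mul_one _
            _ ≤ (2:ℝ) ^ N * R ^ (d:ℝ) := by nlinarith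
        · obtain ⟨m, hm⟩ := Nat.exists_eq_succ_of_ne_zero hposk.ne'
          have hmin : ¬ (R * ‖x - t • y‖ < 2 ^ m) := Nat.find_min hex (by omega)
          push_neg at hmin
          have hb1' : ((2:ℝ) ^ m) ≤ 1 + R * ‖x - t • y‖ := by linarith
          have hmono : (1 + R * ‖x - t • y‖) ^ (-N) ≤ ((2:ℝ) ^ m) ^ (-N) :=
            Real.rpow_le_rpow_of_nonpos (by positivity) hb1' (by linarith)
          have hrw : ((2:ℝ) ^ k₀) ^ (-N) = (2:ℝ) ^ (-N) * ((2:ℝ) ^ m) ^ (-N) := by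
            rw [hm, pow_succ, Real.mul_rpow (by positivity) (by norm_num)]
            ring
          have h2N : (2:ℝ) ^ N * (2:ℝ) ^ (-N) = 1 := by
            rw [← Real.rpow_add two_pos]
            norm_num
          calc f y ≤ R ^ (d:ℝ) * ((2:ℝ) ^ m) ^ (-N) :=
                mul_le_mul_of_nonneg_left hmono hRd.le
            _ = (2:ℝ) ^ N * R ^ (d:ℝ) * ((2:ℝ) ^ k₀) ^ (-N) := by
                rw [hrw, show (2:ℝ) ^ N * R ^ (d:ℝ) * ((2:ℝ) ^ (-N) * ((2:ℝ) ^ m) ^ (-N)) =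
                  ((2:ℝ) ^ N * (2:ℝ) ^ (-N)) * (R ^ (d:ℝ) * ((2:ℝ) ^ m) ^ (-N)) from by ring,
                  h2N, one_mul]
      calc ENNReal.ofReal (f y) ≤ Ek k₀ := ENNReal.ofReal_le_ofReal hfb
        _ = (S k₀).indicator (fun _ => Ek k₀) y := (indicator_of_mem hyS (fun _ => Ek k₀)).symm
        _ ≤ ∑' k, (S k).indicator (fun _ => Ek k) y := ENNReal.le_tsum k₀
    have hμS : ∀ k, μ (S k) ≤ ENNReal.ofReal (C₁ * ((2:ℝ) ^ k / R) ^ b) := by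
      intro k
      have hr : (0:ℝ) < 2 ^ k / R := by positivity
      refine (measure_mono ?_).trans (frost (t⁻¹ • x) _ hr)
      intro y hy
      simp only [hSdef, mem_setOf_eq] at hy
      rw [mem_ball, dist_eq_norm]
      have he : x - t • y = t • (t⁻¹ • x - y) := by
        rw [smul_sub, smul_smul, mul_inv_cancel₀ htpos.ne', one_smul]
      have hnorm : ‖x - t • y‖ = t * ‖t⁻¹ • x - y‖ := by
        rw [he, norm_smul, Real.norm_eq_abs, abs_of_pos htpos]
      calc ‖y - t⁻¹ • x‖ = ‖t⁻¹ • x - y‖ := norm_sub_rev _ _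
        _ ≤ t * ‖t⁻¹ • x - y‖ := le_mul_of_one_le_left (norm_nonneg _) ht1
        _ = ‖x - t • y‖ := hnorm.symm
        _ < 2 ^ k / R := hy
    have hterm : ∀ k : ℕ, (2:ℝ) ^ N * R ^ (d:ℝ) * ((2:ℝ) ^ k) ^ (-N) *
        (C₁ * ((2:ℝ) ^ k / R) ^ b) = ((2:ℝ) ^ N * C₁ * R ^ ((d:ℝ) - b)) * q ^ k := by
      intro k
      have h2k : (0:ℝ) < (2:ℝ) ^ k := by positivity
      have hcomb : ((2:ℝ) ^ k) ^ (-N) * ((2:ℝ) ^ k) ^ b = q ^ k := by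
        rw [← Real.rpow_add h2k]
        have e2 : ((2:ℝ) ^ k) ^ (-N + b) = (2:ℝ) ^ ((b - N) * (k:ℝ)) := by
          rw [← Real.rpow_natCast (2:ℝ) k, ← Real.rpow_mul (by norm_num)]
          ring_nf
        rw [e2, Real.rpow_mul (by norm_num), Real.rpow_natCast]
      rw [Real.div_rpow (by positivity) hRpos.le, Real.rpow_sub hRpos, ← hcomb]
      ring
    calc ∫⁻ y, ENNReal.ofReal (f y) ∂μ
        ≤ ∫⁻ y, ∑' k, (S k).indicator (fun _ => Ek k) y ∂μ := lintegral_mono hpt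
      _ = ∑' k, ∫⁻ y, (S k).indicator (fun _ => Ek k) y ∂μ :=
          lintegral_tsum fun k => (measurable_const.indicator (hSm k)).aemeasurable
      _ = ∑' k, Ek k * μ (S k) := by
          refine tsum_congr fun k => ?_
          rw [lintegral_indicator (hSm k), setLIntegral_const]
      _ ≤ ∑' k, Ek k * ENNReal.ofReal (C₁ * ((2:ℝ) ^ k / R) ^ b) :=
          ENNReal.tsum_le_tsum fun k => mul_le_mul' le_rfl (hμS k)
      _ = ∑' k, ENNReal.ofReal ((2:ℝ) ^ N * C₁ * R ^ ((d:ℝ) - b)) * ENNReal.ofReal q ^ k := by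
          refine tsum_congr fun k => ?_
          rw [hEdef, ← ENNReal.ofReal_mul (by positivity), hterm k,
            ENNReal.ofReal_mul (by positivity), ENNReal.ofReal_pow hqpos.le]
      _ = ENNReal.ofReal ((2:ℝ) ^ N * C₁ * R ^ ((d:ℝ) - b)) * (1 - ENNReal.ofReal q)⁻¹ := by
          rw [ENNReal.tsum_mul_left, ENNReal.tsum_geometric]
      _ = ENNReal.ofReal ((2:ℝ) ^ N * C₁ * R ^ ((d:ℝ) - b) * (1 - q)⁻¹) := by
          rw [show (1:ℝ≥0∞) - ENNReal.ofReal q = ENNReal.ofReal (1 - q) by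
              rw [ENNReal.ofReal_sub _ hqpos.le, ENNReal.ofReal_one],
            ← ENNReal.ofReal_inv_of_pos h1q, ← ENNReal.ofReal_mul (by positivity)]
      _ ≤ ENNReal.ofReal (K * (5:ℝ) ^ (N - (d:ℝ) - 1) * R ^ ((d:ℝ) - b) *
          (1 + ‖x‖) ^ (-N + (d:ℝ) + 1)) := by
          refine ENNReal.ofReal_le_ofReal ?_
          have hxpos : (0:ℝ) < (1 + ‖x‖) ^ (N - (d:ℝ) - 1) := by positivity
          have hx5 : (1 + ‖x‖) ^ (N - (d:ℝ) - 1) ≤ (5:ℝ) ^ (N - (d:ℝ) - 1) :=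
            Real.rpow_le_rpow (by positivity) (by linarith) (by linarith)
          have hinv : (1 + ‖x‖) ^ (-N + (d:ℝ) + 1) = ((1 + ‖x‖) ^ (N - (d:ℝ) - 1))⁻¹ := by
            rw [← Real.rpow_neg (by positivity)]
            ring_nf
          have h15 : (1:ℝ) ≤ (5:ℝ) ^ (N - (d:ℝ) - 1) * (1 + ‖x‖) ^ (-N + (d:ℝ) + 1) := by
            rw [hinv, ← div_eq_mul_inv, le_div_iff₀ hxpos, one_mul]
            exact hx5
          have hKA : (2:ℝ) ^ N * C₁ * (1 - q)⁻¹ ≤ K := by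
            have : (0:ℝ) < (4:ℝ) ^ N * C₁ := by positivity
            rw [hKdef]
            linarith
          have hRdb : (0:ℝ) < R ^ ((d:ℝ) - b) := by positivity
          calc (2:ℝ) ^ N * C₁ * R ^ ((d:ℝ) - b) * (1 - q)⁻¹
              = ((2:ℝ) ^ N * C₁ * (1 - q)⁻¹) * R ^ ((d:ℝ) - b) * 1 := by ring
            _ ≤ K * R ^ ((d:ℝ) - b) *
                ((5:ℝ) ^ (N - (d:ℝ) - 1) * (1 + ‖x‖) ^ (-N + (d:ℝ) + 1)) := by
                have hA0 : (0:ℝ) ≤ (2:ℝ) ^ N * C₁ * (1 - q)⁻¹ := by positivity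
                exact mul_le_mul (mul_le_mul hKA le_rfl hRdb.le
                  (le_trans hA0 hKA)) h15 zero_le_one
                  (by positivity)
            _ = K * (5:ℝ) ^ (N - (d:ℝ) - 1) * R ^ ((d:ℝ) - b) *
                (1 + ‖x‖) ^ (-N + (d:ℝ) + 1) := by ring
end
end

section
/- Let 1 ≤ r < ∞ and I = [1,2]. There is a constant C depending only on r such that for every function F : ℝ^d × I → ℂ which is continuously differentiable in t with F and ∂_t F in L^r(ℝ^d × I), ‖ sup_{t∈I} |F(·,t)| ‖_{L^r(ℝ^d)} ≤ C ( ‖F‖_{L^r(ℝ^d×I)} + ‖F‖_{L^r(ℝ^d×I)}^{(r−1)/r} ‖∂_t F‖_{L^r(ℝ^d×I)}^{1/r} ). -/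
open MeasureTheory Real Set Metric FourierTransform
open scoped ENNReal NNReal RealInnerProductSpace

noncomputable section

variable {d : ℕ}

/-! Fix `x`. The fundamental theorem of calculus applied to `√(‖F x ·‖ ^ 2 + ε) ^ r`, a
differentiable substitute for `‖F x ·‖ ^ r` (which need not be differentiable where `F x`
vanishes), gives after `ε → 0`
`‖F x t‖ ^ r ≤ ‖F x s‖ ^ r + r ∫_I ‖F x‖ ^ (r - 1) ‖G x‖` for all `s, t ∈ I`.
Averaging over `s` bounds `sup_t ‖F x t‖ ^ r` by `∫_I ‖F x‖ ^ r + r ∫_I ‖F x‖ ^ (r - 1) ‖G x‖`.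
Integrating in `x` and applying Hölder's inequality with exponents `r / (r - 1)` and `r` to the
last term gives the claim with `C = r ^ (1 / r)`. -/

open Filter Topology
open scoped Interval

theorem sub_le_setIntegral_of_abs_deriv_le {φ D B : ℝ → ℝ} {a b s t : ℝ}
    (hφ : ∀ u ∈ Icc a b, HasDerivWithinAt φ (D u) (Icc a b) u)
    (hD : ContinuousOn D (Icc a b)) (hB : IntegrableOn B (Icc a b))
    (hDB : ∀ u ∈ Icc a b, |D u| ≤ B u) (hs : s ∈ Icc a b) (ht : t ∈ Icc a b) :
    φ t - φ s ≤ ∫ u in Icc a b, B u := by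
  have hsub : uIcc s t ⊆ Icc a b := uIcc_subset_Icc hs ht
  have hsub' : Ι s t ⊆ Icc a b := uIoc_subset_uIcc.trans hsub
  have hFTC : ∫ u in s..t, D u = φ t - φ s := by
    refine intervalIntegral.integral_eq_sub_of_hasDeriv_right
      (fun u hu => (hφ u (hsub hu)).continuousWithinAt.mono hsub) (fun u hu => ?_)
      (hD.mono hsub).intervalIntegrable
    have hu' : u ∈ Ioo a b := Ioo_subset_Ioo (le_min hs.1 ht.1) (max_le hs.2 ht.2) hu
    exact ((hφ u (Ioo_subset_Icc_self hu')).hasDerivAt (Icc_mem_nhds hu'.1 hu'.2)).hasDerivWithinAt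
  calc φ t - φ s ≤ |∫ u in s..t, D u| := hFTC ▸ le_abs_self _
    _ ≤ ∫ u in Ι s t, |D u| := by
      simpa only [Real.norm_eq_abs] using
        intervalIntegral.norm_integral_le_integral_norm_uIoc (f := D) (μ := volume)
    _ ≤ ∫ u in Ι s t, B u :=
      setIntegral_mono_on ((hD.abs.integrableOn_compact isCompact_Icc).mono_set hsub')
        (hB.mono_set hsub') measurableSet_uIoc fun u hu => hDB u (hsub' hu)
    _ ≤ ∫ u in Icc a b, B u :=
      setIntegral_mono_set hB
        ((ae_restrict_mem measurableSet_Icc).mono fun u hu => (abs_nonneg _).trans (hDB u hu))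
        hsub'.eventuallyLE

section NormedGroup

variable {E : Type*} [NormedAddCommGroup E] {f : ℝ → E}

theorem ContinuousOn.sqrt_norm_sq_add_rpow {S : Set ℝ} (hf : ContinuousOn f S) (ε : ℝ) {p : ℝ}
    (hp : 0 ≤ p) : ContinuousOn (fun u => √(‖f u‖ ^ 2 + ε) ^ p) S :=
  (Real.continuous_rpow_const hp).comp_continuousOn ((hf.norm.pow 2).add continuousOn_const).sqrt

theorem tendsto_sqrt_norm_sq_add_rpow (x : E) {p : ℝ} (hp : 0 ≤ p) :
    Tendsto (fun ε => √(‖x‖ ^ 2 + ε) ^ p) (𝓝[>] 0) (𝓝 (‖x‖ ^ p)) := by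
  have hcont : Continuous fun ε => √(‖x‖ ^ 2 + ε) ^ p :=
    (Real.continuous_rpow_const hp).comp (continuous_const.add continuous_id).sqrt
  simpa [Real.sqrt_sq (norm_nonneg x)] using (hcont.tendsto 0).mono_left nhdsWithin_le_nhds

theorem ofReal_norm_rpow (x : E) {p : ℝ} (hp : 0 ≤ p) : ENNReal.ofReal (‖x‖ ^ p) = ‖x‖ₑ ^ p := by
  rw [← ofReal_norm, ENNReal.ofReal_rpow_of_nonneg (norm_nonneg _) hp]

end NormedGroup

section InnerProduct

variable {E : Type*} [NormedAddCommGroup E] [InnerProductSpace ℝ E] {f f' : ℝ → E}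
  {a b r ε s t : ℝ}

theorem HasDerivWithinAt.sqrt_norm_sq_add_rpow {f : ℝ → E} {f' : E} {S : Set ℝ} {x : ℝ}
    (hf : HasDerivWithinAt f f' S x) (hε : 0 < ε) (p : ℝ) :
    HasDerivWithinAt (fun u => √(‖f u‖ ^ 2 + ε) ^ p)
      (p * √(‖f x‖ ^ 2 + ε) ^ (p - 1) * (⟪f x, f'⟫ / √(‖f x‖ ^ 2 + ε))) S x := by
  convert ((hf.norm_sq.add_const ε).sqrt (by positivity)).rpow_const (p := p)
    (Or.inl (by positivity)) using 1
  field_simp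

theorem sqrt_norm_sq_add_rpow_sub_le (hr : 1 ≤ r)
    (hf : ∀ u ∈ Icc a b, HasDerivWithinAt f (f' u) (Icc a b) u) (hf' : ContinuousOn f' (Icc a b))
    (hε : 0 < ε) (hs : s ∈ Icc a b) (ht : t ∈ Icc a b) :
    √(‖f t‖ ^ 2 + ε) ^ r - √(‖f s‖ ^ 2 + ε) ^ r ≤
      ∫ u in Icc a b, r * √(‖f u‖ ^ 2 + ε) ^ (r - 1) * ‖f' u‖ := by
  have hN : ∀ u, 0 < √(‖f u‖ ^ 2 + ε) := fun u => by positivity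
  have hfc : ContinuousOn f (Icc a b) := fun u hu => (hf u hu).continuousWithinAt
  have hNc : ContinuousOn (fun u => √(‖f u‖ ^ 2 + ε)) (Icc a b) :=
    ((hfc.norm.pow 2).add continuousOn_const).sqrt
  have hNr : ContinuousOn (fun u => r * √(‖f u‖ ^ 2 + ε) ^ (r - 1)) (Icc a b) :=
    continuousOn_const.mul (hNc.rpow_const fun u _ => Or.inl (hN u).ne')
  refine sub_le_setIntegral_of_abs_deriv_le (fun u hu => (hf u hu).sqrt_norm_sq_add_rpow hε r)
    (hNr.mul ((hfc.inner hf').div hNc fun u _ => (hN u).ne'))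
    ((hNr.mul hf'.norm).integrableOn_compact isCompact_Icc) (fun u _ => ?_) hs ht
  have hfN : ‖f u‖ ≤ √(‖f u‖ ^ 2 + ε) := Real.le_sqrt_of_sq_le (by linarith)
  rw [abs_mul, abs_of_nonneg (by positivity), abs_div, abs_of_pos (hN u)]
  gcongr
  rw [div_le_iff₀ (hN u)]
  calc |⟪f u, f' u⟫| ≤ ‖f u‖ * ‖f' u‖ := abs_real_inner_le_norm _ _
    _ ≤ ‖f' u‖ * √(‖f u‖ ^ 2 + ε) := by rw [mul_comm]; gcongr

theorem norm_rpow_sub_le (hr : 1 ≤ r)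
    (hf : ∀ u ∈ Icc a b, HasDerivWithinAt f (f' u) (Icc a b) u) (hf' : ContinuousOn f' (Icc a b))
    (hs : s ∈ Icc a b) (ht : t ∈ Icc a b) :
    ‖f t‖ ^ r - ‖f s‖ ^ r ≤ ∫ u in Icc a b, r * ‖f u‖ ^ (r - 1) * ‖f' u‖ := by
  have hfc : ContinuousOn f (Icc a b) := fun u hu => (hf u hu).continuousWithinAt
  have hr0 : 0 ≤ r := by linarith
  have hr1 : 0 ≤ r - 1 := by linarith
  have hB : ∀ ε, ContinuousOn (fun u => r * √(‖f u‖ ^ 2 + ε) ^ (r - 1) * ‖f' u‖) (Icc a b) :=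
    fun ε => (continuousOn_const.mul (hfc.sqrt_norm_sq_add_rpow ε hr1)).mul hf'.norm
  have hlim_left := (tendsto_sqrt_norm_sq_add_rpow (f t) hr0).sub
    (tendsto_sqrt_norm_sq_add_rpow (f s) hr0)
  have hlim_right :
      Tendsto (fun ε => ∫ u in Icc a b, r * √(‖f u‖ ^ 2 + ε) ^ (r - 1) * ‖f' u‖) (𝓝[>] 0)
        (𝓝 (∫ u in Icc a b, r * ‖f u‖ ^ (r - 1) * ‖f' u‖)) := by
    refine tendsto_integral_filter_of_dominated_convergence _
      (Eventually.of_forall fun ε => (hB ε).aestronglyMeasurable measurableSet_Icc) ?_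
      ((hB 1).integrableOn_compact isCompact_Icc)
      (ae_of_all _ fun u => ((tendsto_sqrt_norm_sq_add_rpow (f u) hr1).const_mul r).mul_const _)
    filter_upwards [Ioo_mem_nhdsGT zero_lt_one] with ε hε
    refine ae_of_all _ fun u => ?_
    rw [Real.norm_of_nonneg (by positivity)]
    gcongr
    linarith [hε.2]
  exact le_of_tendsto_of_tendsto hlim_left hlim_right
    (eventually_mem_nhdsWithin.mono fun ε hε => sqrt_norm_sq_add_rpow_sub_le hr hf hf' hε hs ht)

theorem mul_norm_rpow_le_setIntegral (hr : 1 ≤ r)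
    (hf : ∀ u ∈ Icc a b, HasDerivWithinAt f (f' u) (Icc a b) u) (hf' : ContinuousOn f' (Icc a b))
    (ht : t ∈ Icc a b) :
    (b - a) * ‖f t‖ ^ r ≤ (∫ s in Icc a b, ‖f s‖ ^ r) +
      (b - a) * ∫ u in Icc a b, r * ‖f u‖ ^ (r - 1) * ‖f' u‖ := by
  have hfc : ContinuousOn f (Icc a b) := fun u hu => (hf u hu).continuousWithinAt
  have hfr : IntegrableOn (fun s => ‖f s‖ ^ r) (Icc a b) :=
    (hfc.norm.rpow_const fun _ _ => Or.inr (by linarith)).integrableOn_compact isCompact_Icc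
  have hint := setIntegral_mono_on (integrableOn_const (by simp)) hfr measurableSet_Icc
    fun s hs => sub_le_comm.mp (norm_rpow_sub_le hr hf hf' hs ht)
  rw [setIntegral_const, Real.volume_real_Icc_of_le (ht.1.trans ht.2), smul_eq_mul] at hint
  linarith

theorem ofReal_mul_iSup_enorm_rpow_le (hr : 1 ≤ r)
    (hf : ∀ u ∈ Icc a b, HasDerivWithinAt f (f' u) (Icc a b) u) (hf' : ContinuousOn f' (Icc a b)) :
    ENNReal.ofReal (b - a) * (⨆ t : Icc a b, ‖f t‖ₑ) ^ r ≤ (∫⁻ s in Icc a b, ‖f s‖ₑ ^ r) +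
      ENNReal.ofReal ((b - a) * r) * ∫⁻ u in Icc a b, ‖f u‖ₑ ^ (r - 1) * ‖f' u‖ₑ := by
  have hr0 : 0 < r := by linarith
  have hfc : ContinuousOn f (Icc a b) := fun u hu => (hf u hu).continuousWithinAt
  have hfr : IntegrableOn (fun s => ‖f s‖ ^ r) (Icc a b) :=
    (hfc.norm.rpow_const fun _ _ => Or.inr hr0.le).integrableOn_compact isCompact_Icc
  have hK : IntegrableOn (fun u => r * ‖f u‖ ^ (r - 1) * ‖f' u‖) (Icc a b) :=
    ((continuousOn_const.mul (hfc.norm.rpow_const fun _ _ => Or.inr (by linarith))).mul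
      hf'.norm).integrableOn_compact isCompact_Icc
  have hfr_eq : ENNReal.ofReal (∫ s in Icc a b, ‖f s‖ ^ r) = ∫⁻ s in Icc a b, ‖f s‖ₑ ^ r := by
    rw [ofReal_integral_eq_lintegral_ofReal hfr (ae_of_all _ fun _ => by positivity)]
    exact lintegral_congr fun s => ofReal_norm_rpow _ hr0.le
  have hsup : (⨆ t : Icc a b, ‖f t‖ₑ) ^ r = ⨆ t : Icc a b, ‖f t‖ₑ ^ r :=
    (ENNReal.orderIsoRpow r hr0).map_iSup _
  rw [hsup, ENNReal.mul_iSup]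
  refine iSup_le fun ⟨t, ht⟩ => ?_
  have hab : 0 ≤ b - a := by linarith [ht.1.trans ht.2]
  have hK_eq : ENNReal.ofReal ((b - a) * ∫ u in Icc a b, r * ‖f u‖ ^ (r - 1) * ‖f' u‖) =
      ENNReal.ofReal ((b - a) * r) * ∫⁻ u in Icc a b, ‖f u‖ₑ ^ (r - 1) * ‖f' u‖ₑ := by
    rw [ENNReal.ofReal_mul hab, ENNReal.ofReal_mul hab, mul_assoc]
    congr 1
    rw [ofReal_integral_eq_lintegral_ofReal hK (ae_of_all _ fun _ => by positivity),
      ← lintegral_const_mul' _ _ ENNReal.ofReal_ne_top]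
    refine lintegral_congr fun u => ?_
    rw [ENNReal.ofReal_mul (by positivity), ENNReal.ofReal_mul hr0.le,
      ofReal_norm_rpow _ (by linarith), ofReal_norm, mul_assoc]
  calc ENNReal.ofReal (b - a) * ‖f t‖ₑ ^ r = ENNReal.ofReal ((b - a) * ‖f t‖ ^ r) := by
        rw [ENNReal.ofReal_mul hab, ofReal_norm_rpow _ hr0.le]
    _ ≤ ENNReal.ofReal ((∫ s in Icc a b, ‖f s‖ ^ r) +
          (b - a) * ∫ u in Icc a b, r * ‖f u‖ ^ (r - 1) * ‖f' u‖) :=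
        ENNReal.ofReal_le_ofReal (mul_norm_rpow_le_setIntegral hr hf hf' ht)
    _ = _ := by
        rw [ENNReal.ofReal_add (setIntegral_nonneg measurableSet_Icc fun _ _ => by positivity)
          (mul_nonneg hab (setIntegral_nonneg measurableSet_Icc fun _ _ => by positivity)),
          hfr_eq, hK_eq]

end InnerProduct

theorem ENNReal.lintegral_rpow_sub_one_mul_le {α : Type*} [MeasurableSpace α] {μ : Measure α}
    {f g : α → ℝ≥0∞} (hf : AEMeasurable f μ) (hg : AEMeasurable g μ) {r : ℝ} (hr : 1 ≤ r) :
    ∫⁻ x, f x ^ (r - 1) * g x ∂μ ≤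
      (∫⁻ x, f x ^ r ∂μ) ^ ((r - 1) / r) * (∫⁻ x, g x ^ r ∂μ) ^ (1 / r) := by
  have hr0 : r ≠ 0 := by positivity
  convert ENNReal.lintegral_mul_norm_pow_le (hf.pow_const r) (hg.pow_const r)
    (p := (r - 1) / r) (q := 1 / r) (by bound) (by positivity) (by field_simp; ring) using 3 with x
  rw [← ENNReal.rpow_mul, ← ENNReal.rpow_mul, mul_div_cancel₀ _ hr0, mul_one_div_cancel hr0,
    ENNReal.rpow_one]

theorem ENNReal.rpow_one_div_le_of_le_add {A P Q : ℝ≥0∞} {r : ℝ} (hr : 1 ≤ r)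
    (h : A ≤ P + ENNReal.ofReal r * (P ^ ((r - 1) / r) * Q ^ (1 / r))) :
    A ^ (1 / r) ≤ ENNReal.ofReal (r ^ (1 / r)) *
      (P ^ (1 / r) + (P ^ (1 / r)) ^ ((r - 1) / r) * (Q ^ (1 / r)) ^ (1 / r)) := by
  have hr0 : 0 < r := by linarith
  have hc : 1 ≤ ENNReal.ofReal (r ^ (1 / r)) :=
    ENNReal.one_le_ofReal.mpr (Real.one_le_rpow hr (by positivity))
  calc A ^ (1 / r) ≤ (P + ENNReal.ofReal r * (P ^ ((r - 1) / r) * Q ^ (1 / r))) ^ (1 / r) := by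
        gcongr
    _ ≤ P ^ (1 / r) + (ENNReal.ofReal r * (P ^ ((r - 1) / r) * Q ^ (1 / r))) ^ (1 / r) :=
        ENNReal.rpow_add_le_add_rpow _ _ (by positivity) ((div_le_one hr0).mpr hr)
    _ = P ^ (1 / r) + ENNReal.ofReal (r ^ (1 / r)) *
          ((P ^ (1 / r)) ^ ((r - 1) / r) * (Q ^ (1 / r)) ^ (1 / r)) := by
        have hP : (P ^ ((r - 1) / r)) ^ (1 / r) = (P ^ (1 / r)) ^ ((r - 1) / r) := by
          rw [← ENNReal.rpow_mul, ← ENNReal.rpow_mul, mul_comm]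
        rw [ENNReal.mul_rpow_of_nonneg _ _ (by positivity),
          ENNReal.mul_rpow_of_nonneg _ _ (by positivity),
          ENNReal.ofReal_rpow_of_nonneg hr0.le (by positivity), hP]
    _ ≤ ENNReal.ofReal (r ^ (1 / r)) *
          (P ^ (1 / r) + (P ^ (1 / r)) ^ ((r - 1) / r) * (Q ^ (1 / r)) ^ (1 / r)) := by
        rw [mul_add]
        gcongr
        exact le_mul_of_one_le_left' hc

section ProductSpace

variable {E : Type*} [NormedAddCommGroup E] [InnerProductSpace ℝ E] [MeasurableSpace E]
  [OpensMeasurableSpace E] {X : Type*} [MeasurableSpace X] {μ : Measure X}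
  {F G : X → ℝ → E} {a b r : ℝ}

theorem ofReal_mul_lintegral_iSup_enorm_rpow_le (hr : 1 ≤ r)
    (hF : Measurable (Function.uncurry F)) (hG : Measurable (Function.uncurry G))
    (hFG : ∀ x, ∀ u ∈ Icc a b, HasDerivWithinAt (F x) (G x u) (Icc a b) u)
    (hGc : ∀ x, ContinuousOn (G x) (Icc a b)) :
    ENNReal.ofReal (b - a) * ∫⁻ x, (⨆ t : Icc a b, ‖F x t‖ₑ) ^ r ∂μ ≤
      (∫⁻ x, (∫⁻ t in Icc a b, ‖F x t‖ₑ ^ r) ∂μ) + ENNReal.ofReal ((b - a) * r) *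
        ((∫⁻ x, (∫⁻ t in Icc a b, ‖F x t‖ₑ ^ r) ∂μ) ^ ((r - 1) / r) *
          (∫⁻ x, (∫⁻ t in Icc a b, ‖G x t‖ₑ ^ r) ∂μ) ^ (1 / r)) := by
  set ν := μ.prod (volume.restrict (Icc a b))
  have hFm : Measurable fun p : X × ℝ => ‖F p.1 p.2‖ₑ := hF.enorm
  have hGm : Measurable fun p : X × ℝ => ‖G p.1 p.2‖ₑ := hG.enorm
  have hiter : ∀ h : X × ℝ → ℝ≥0∞, Measurable h →
      ∫⁻ x, (∫⁻ t in Icc a b, h (x, t)) ∂μ = ∫⁻ p, h p ∂ν :=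
    fun h hh => (lintegral_prod h hh.aemeasurable).symm
  calc ENNReal.ofReal (b - a) * ∫⁻ x, (⨆ t : Icc a b, ‖F x t‖ₑ) ^ r ∂μ
      = ∫⁻ x, ENNReal.ofReal (b - a) * (⨆ t : Icc a b, ‖F x t‖ₑ) ^ r ∂μ :=
        (lintegral_const_mul' _ _ ENNReal.ofReal_ne_top).symm
    _ ≤ ∫⁻ x, ((∫⁻ t in Icc a b, ‖F x t‖ₑ ^ r) + ENNReal.ofReal ((b - a) * r) *
          ∫⁻ t in Icc a b, ‖F x t‖ₑ ^ (r - 1) * ‖G x t‖ₑ) ∂μ :=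
        lintegral_mono fun x => ofReal_mul_iSup_enorm_rpow_le hr (hFG x) (hGc x)
    _ = (∫⁻ x, (∫⁻ t in Icc a b, ‖F x t‖ₑ ^ r) ∂μ) + ENNReal.ofReal ((b - a) * r) *
          ∫⁻ p, ‖F p.1 p.2‖ₑ ^ (r - 1) * ‖G p.1 p.2‖ₑ ∂ν := by
        rw [lintegral_add_left ((hFm.pow_const r).lintegral_prod_right'),
          lintegral_const_mul' _ _ ENNReal.ofReal_ne_top]
        exact congrArg (_ + ENNReal.ofReal ((b - a) * r) * ·)
          (hiter _ ((hFm.pow_const _).mul hGm))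
    _ ≤ _ := by
        rw [hiter _ (hFm.pow_const r), hiter _ (hGm.pow_const r)]
        gcongr
        exact ENNReal.lintegral_rpow_sub_one_mul_le hFm.aemeasurable hGm.aemeasurable hr

end ProductSpace

/-- Sobolev-type maximal bound in t: for F continuously differentiable in t ∈ I = [1,2]
with F, ∂_t F ∈ L^r(ℝ^d × I),
‖sup_{t∈I}|F(·,t)|‖_{L^r} ≤ C(‖F‖_{L^r} + ‖F‖_{L^r}^{(r−1)/r} ‖∂_t F‖_{L^r}^{1/r}). -/
theorem stmt14 (r : ℝ) (hr : 1 ≤ r) :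
    ∃ C : ℝ, 0 < C ∧ ∀ (d : ℕ) (F G : EuclideanSpace ℝ (Fin d) → ℝ → ℂ),
      Measurable (Function.uncurry F) → Measurable (Function.uncurry G) →
      (∀ x, ∀ t ∈ Icc (1:ℝ) 2, HasDerivWithinAt (F x) (G x t) (Icc (1:ℝ) 2) t) →
      (∀ x, ContinuousOn (G x) (Icc (1:ℝ) 2)) →
      (∫⁻ x, ∫⁻ t in Icc (1:ℝ) 2, (‖F x t‖₊ : ℝ≥0∞) ^ r) ≠ ⊤ →
      (∫⁻ x, ∫⁻ t in Icc (1:ℝ) 2, (‖G x t‖₊ : ℝ≥0∞) ^ r) ≠ ⊤ →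
      (∫⁻ x, (⨆ t : (Icc (1:ℝ) 2), (‖F x (t:ℝ)‖₊ : ℝ≥0∞)) ^ r) ^ (1/r) ≤
        ENNReal.ofReal C *
          ((∫⁻ x, ∫⁻ t in Icc (1:ℝ) 2, (‖F x t‖₊ : ℝ≥0∞) ^ r) ^ (1/r) +
            ((∫⁻ x, ∫⁻ t in Icc (1:ℝ) 2, (‖F x t‖₊ : ℝ≥0∞) ^ r) ^ (1/r)) ^ ((r-1)/r) *
              ((∫⁻ x, ∫⁻ t in Icc (1:ℝ) 2, (‖G x t‖₊ : ℝ≥0∞) ^ r) ^ (1/r)) ^ (1/r)) := by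
  refine ⟨r ^ (1 / r), by positivity, fun d F G hF hG hFG hGc _ _ => ?_⟩
  have h := ofReal_mul_lintegral_iSup_enorm_rpow_le (μ := volume) hr hF hG hFG hGc
  rw [show (2:ℝ) - 1 = 1 by norm_num, ENNReal.ofReal_one, one_mul, one_mul] at h
  exact ENNReal.rpow_one_div_le_of_le_add hr h
end
end

section
/- Let d ≥ 1, 0 < β ≤ d and 0 < γ ≤ 1, and define h(x) = |x|^{−β} (log(1/|x|))^{−γ} for 0 < |x| ≤ 2^{−1/d} and h(x) = 0 otherwise. Then h belongs to the Lorentz space L^{d/β, r}(ℝ^d) for every r > 1/γ, but h does not belong to L^{d/β, 1/γ}(ℝ^d). -/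
open MeasureTheory Real Set Metric FourierTransform
open scoped ENNReal NNReal RealInnerProductSpace

noncomputable section

variable {d : ℕ}

/-- The function h(x) = |x|^{−b}(log(1/|x|))^{−γ} on 0 < |x| ≤ 2^{−1/d}, extended by 0. -/
def hfun (d : ℕ) (b γ : ℝ) (x : EuclideanSpace ℝ (Fin d)) : ℝ :=
  if 0 < ‖x‖ ∧ ‖x‖ ≤ (2:ℝ) ^ (-(1:ℝ)/(d:ℝ)) then
    ‖x‖ ^ (-b) * (Real.log (1/‖x‖)) ^ (-γ)
  else 0

/-! On its support, in the variable `u = log (1 / ‖x‖)`, the function is `h = e^{b u} u^{-γ}`.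
Hence for large `λ` the level set `{h > λ}` lies in a ball of volume
`≈ (λ (log λ / b)^γ)^{-d/b}`, and the Lorentz integrand `(λ |{h > λ}|^{b/d})^r / λ` is
`O((log λ)^{-γ r} / λ)` at infinity and `O(λ^{r-1})` near `0`: integrable when `γ r > 1`.
Conversely `{h > λ}` contains the annulus `e^{-u} < ‖x‖ ≤ 2 e^{-u}` as soon as
`λ < Λ(u) = e^{b (u - log 2)} u^{-γ}`, so for `r = 1/γ` the integral over `(Λ(u)/2, Λ(u))` is
`≳ 1/u`. Along an arithmetic progression `u_k = c (k + 1)` with `c` large, `Λ` at least doubles,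
the intervals are disjoint, and the harmonic series diverges. -/

lemma rpow_natCast_rpow_div {ρ : ℝ} (hρ : 0 ≤ ρ) {n : ℕ} (hn : n ≠ 0) (b : ℝ) :
    (ρ ^ n) ^ (b / n) = ρ ^ b := by
  rw [← Real.rpow_natCast, ← Real.rpow_mul hρ, mul_div_cancel₀ _ (Nat.cast_ne_zero.mpr hn)]

lemma ofReal_mul_rpow_div_ofReal {l A q r : ℝ} (ω : ℝ≥0∞) (hl : 0 < l) (hA : 0 ≤ A)
    (hq : 0 ≤ q) (hr : 0 ≤ r) :
    (ENNReal.ofReal l * (ENNReal.ofReal A * ω) ^ q) ^ r / ENNReal.ofReal l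
      = (ω ^ q) ^ r * ENNReal.ofReal ((l * A ^ q) ^ r / l) := by
  rw [ENNReal.mul_rpow_of_nonneg _ _ hq, ENNReal.ofReal_rpow_of_nonneg hA hq, ← mul_assoc,
    ← ENNReal.ofReal_mul hl.le, ENNReal.mul_rpow_of_nonneg _ _ hr,
    ENNReal.ofReal_rpow_of_nonneg (by positivity) hr, ENNReal.ofReal_div_of_pos hl,
    mul_comm, mul_div_assoc]

lemma tsum_ofReal_one_div_succ_eq_top : ∑' k : ℕ, ENNReal.ofReal (1 / ((k : ℝ) + 1)) = ⊤ := by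
  refine ENNReal.tsum_coe_eq_top_iff_not_summable_coe.mpr fun h ↦ ?_
  refine mt (summable_nat_add_iff 1).mp Real.not_summable_one_div_natCast ?_
  refine h.congr fun k ↦ ?_
  rw [Real.coe_toNNReal _ (by positivity)]
  push_cast
  rfl

lemma tsum_mul_ofReal_rpow_div_two_eq_top {C : ℝ≥0∞} {κ c γ : ℝ} (hC : C ≠ 0) (hκ : 0 < κ)
    (hc : 0 < c) (hγ : 0 < γ) :
    ∑' k : ℕ, C * ENNReal.ofReal ((κ * (c * (k + 1)) ^ (-γ)) ^ (1 / γ) / 2) = ⊤ := by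
  have hterm : ∀ k : ℕ, C * ENNReal.ofReal ((κ * (c * (k + 1)) ^ (-γ)) ^ (1 / γ) / 2)
      = C * ENNReal.ofReal (κ ^ (1 / γ) / (2 * c)) * ENNReal.ofReal (1 / (k + 1)) := by
    intro k
    rw [mul_assoc C, ← ENNReal.ofReal_mul (by positivity), Real.mul_rpow hκ.le (by positivity),
      ← Real.rpow_mul (by positivity), neg_mul, mul_one_div_cancel hγ.ne', Real.rpow_neg_one]
    congr 2
    field_simp
  rw [tsum_congr hterm, ENNReal.tsum_mul_left, tsum_ofReal_one_div_succ_eq_top,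
    ENNReal.mul_top (mul_ne_zero hC (ENNReal.ofReal_pos.mpr (by positivity)).ne')]

lemma integrableOn_Ioi_log_rpow_neg_div {a c p : ℝ} (hc : 0 < c) (hac : 1 < a * c)
    (hp : 1 < p) :
    IntegrableOn (fun l ↦ Real.log (l * c) ^ (-p) / l) (Ioi a) := by
  have ha : 0 < a := pos_of_mul_pos_left (one_pos.trans hac) hc.le
  have hderiv : ∀ l ∈ Ici a, HasDerivAt (fun l ↦ Real.log (l * c) ^ (1 - p) / (1 - p))
      (Real.log (l * c) ^ (-p) / l) l := by
    intro l hl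
    have hl0 : 0 < l := ha.trans_le hl
    have hlog : 0 < Real.log (l * c) :=
      Real.log_pos (hac.trans_le (mul_le_mul_of_nonneg_right hl hc.le))
    have := (((hasDerivAt_mul_const c).log (by positivity)).rpow_const
      (p := 1 - p) (Or.inl hlog.ne')).div_const (1 - p)
    refine this.congr_deriv ?_
    rw [sub_sub_cancel_left]
    field_simp [(sub_neg.mpr hp).ne]
  refine integrableOn_Ioi_deriv_of_nonneg' hderiv (fun l hl ↦ ?_) (l := 0) ?_
  · have hl0 : 0 < l := ha.trans hl
    have hlog : 0 < Real.log (l * c) :=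
      Real.log_pos (hac.trans (mul_lt_mul_of_pos_right hl hc))
    positivity
  · have hlog : Filter.Tendsto (fun l ↦ Real.log (l * c)) Filter.atTop Filter.atTop :=
      Real.tendsto_log_atTop.comp (Filter.tendsto_id.atTop_mul_const hc)
    have := ((tendsto_rpow_neg_atTop (sub_pos.mpr hp)).comp hlog).div_const (1 - p)
    simpa [Function.comp_def] using this

lemma setLIntegral_lt_top_of_le_ofReal {α : Type*} [MeasurableSpace α] {μ : Measure α}
    {F : α → ℝ≥0∞} {g : α → ℝ} {s : Set α} {C : ℝ≥0∞} (hs : MeasurableSet s) (hC : C ≠ ⊤)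
    (hg : IntegrableOn g s μ) (hF : ∀ l ∈ s, F l ≤ C * ENNReal.ofReal (g l)) :
    ∫⁻ l in s, F l ∂μ < ⊤ :=
  calc ∫⁻ l in s, F l ∂μ ≤ ∫⁻ l in s, C * ENNReal.ofReal (g l) ∂μ := setLIntegral_mono' hs hF
    _ = C * ∫⁻ l in s, ENNReal.ofReal (g l) ∂μ := lintegral_const_mul' _ _ hC
    _ < ⊤ := ENNReal.mul_lt_top hC.lt_top hg.lintegral_lt_top

lemma tsum_setLIntegral_Ioo_le_setLIntegral_Ioi (F : ℝ → ℝ≥0∞) {Λ : ℕ → ℝ}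
    (hΛ0 : ∀ k, 0 < Λ k) (hΛ : ∀ k, 2 * Λ k ≤ Λ (k + 1)) :
    ∑' k, ∫⁻ l in Ioo (Λ k / 2) (Λ k), F l ≤ ∫⁻ l in Ioi 0, F l := by
  have hmono : Monotone Λ := monotone_nat_of_le_succ fun k ↦ by linarith [hΛ k, hΛ0 k]
  have hdisj : Pairwise (Function.onFun Disjoint fun k ↦ Ioo (Λ k / 2) (Λ k)) := by
    refine (pairwise_disjoint_on _).mpr fun m n hmn ↦ ?_
    obtain ⟨k, rfl⟩ : ∃ k, n = k + 1 := ⟨n - 1, by omega⟩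
    have := hmono (Nat.le_of_lt_succ hmn)
    exact Set.disjoint_left.mpr fun l h₁ h₂ ↦ by linarith [h₁.2, h₂.1, hΛ k]
  rw [← lintegral_iUnion (fun _ ↦ measurableSet_Ioo) hdisj]
  exact lintegral_mono_set (iUnion_subset fun k l hl ↦ (half_pos (hΛ0 k)).trans hl.1)

lemma two_mul_exp_mul_rpow_le {b γ u c s : ℝ} (hγ : 0 ≤ γ) (hu : 0 < u) (hc : 0 ≤ c)
    (hcu : c ≤ u) (hbc : 2 * 2 ^ γ ≤ exp (b * c)) :
    2 * (exp (b * (u - s)) * u ^ (-γ)) ≤ exp (b * (u + c - s)) * (u + c) ^ (-γ) := by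
  have h2u : (2 * u) ^ (-γ) ≤ (u + c) ^ (-γ) :=
    Real.rpow_le_rpow_of_nonpos (by positivity) (by linarith) (by linarith)
  rw [Real.mul_rpow zero_le_two hu.le, Real.rpow_neg zero_le_two] at h2u
  have hexp : exp (b * (u + c - s)) = exp (b * c) * exp (b * (u - s)) := by
    rw [← Real.exp_add]; ring_nf
  rw [hexp]
  calc 2 * (exp (b * (u - s)) * u ^ (-γ))
      = 2 * 2 ^ γ * exp (b * (u - s)) * ((2 ^ γ)⁻¹ * u ^ (-γ)) := by
        field_simp
    _ ≤ exp (b * c) * exp (b * (u - s)) * (u + c) ^ (-γ) := by gcongr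

/- The crude bound `u^{-γ} ≤ c^{-γ}` already forces `u > log (l c^γ) / b`; fed back into
`u^{-γ}`, this gives the sharp radius of the level set. -/
lemma exp_neg_mul_lt_of_lt_exp_mul_rpow {b γ l c u : ℝ} (hb : 0 < b) (hγ : 0 < γ) (hc : 0 < c)
    (hcu : c ≤ u) (hl : 1 < l * c ^ γ) (h : l < exp (b * u) * u ^ (-γ)) :
    exp (-(b * u)) < (Real.log (l * c ^ γ) / b) ^ (-γ) / l := by
  have hcγ : 0 < c ^ γ := by positivity
  have hl0 : 0 < l := pos_of_mul_pos_left (one_pos.trans hl) hcγ.le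
  have hlc : l * c ^ γ < exp (b * u) := by
    have : u ^ (-γ) ≤ (c ^ γ)⁻¹ := by
      rw [← Real.rpow_neg hc.le]
      exact Real.rpow_le_rpow_of_nonpos hc hcu (by linarith)
    rw [← lt_div_iff₀ hcγ, div_eq_mul_inv]
    exact h.trans_le (by gcongr)
  have hL : 0 < Real.log (l * c ^ γ) / b := div_pos (Real.log_pos hl) hb
  have hLu : Real.log (l * c ^ γ) / b < u := by
    rw [div_lt_iff₀ hb, mul_comm u, Real.log_lt_iff_lt_exp (by positivity)]
    exact hlc
  have : l < exp (b * u) * (Real.log (l * c ^ γ) / b) ^ (-γ) :=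
    h.trans_le (mul_le_mul_of_nonneg_left
      (Real.rpow_le_rpow_of_nonpos hL hLu.le (by linarith)) (exp_pos _).le)
  rw [lt_div_iff₀ hl0, Real.exp_neg, inv_mul_lt_iff₀ (exp_pos _)]
  exact this

lemma volume_closedBall_zero {ρ : ℝ} (hρ : 0 ≤ ρ) :
    volume (closedBall (0 : EuclideanSpace ℝ (Fin d)) ρ)
      = ENNReal.ofReal (ρ ^ d) * volume (ball (0 : EuclideanSpace ℝ (Fin d)) 1) := by
  rw [Measure.addHaar_closedBall volume _ hρ, finrank_euclideanSpace_fin]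

lemma volume_closedBall_two_mul_diff_closedBall {t : ℝ} (ht : 0 ≤ t) :
    volume (closedBall (0 : EuclideanSpace ℝ (Fin d)) (2 * t) \ closedBall 0 t)
      = ENNReal.ofReal ((2 ^ d - 1) * t ^ d) * volume (ball (0 : EuclideanSpace ℝ (Fin d)) 1) := by
  rw [measure_sdiff (closedBall_subset_closedBall (by linarith))
      measurableSet_closedBall.nullMeasurableSet measure_closedBall_lt_top.ne,
    volume_closedBall_zero (by positivity), volume_closedBall_zero ht,
    ← ENNReal.sub_mul fun _ _ ↦ measure_ball_lt_top.ne, ← ENNReal.ofReal_sub _ (by positivity)]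
  congr 2
  ring

def lorentzIntegrand (f : EuclideanSpace ℝ (Fin d) → ℝ) (p r l : ℝ) : ℝ≥0∞ :=
  (ENNReal.ofReal l * volume {x | l < |f x|} ^ (1 / p)) ^ r / ENNReal.ofReal l

lemma lorentzR_lt_top_iff {f : EuclideanSpace ℝ (Fin d) → ℝ} {p r : ℝ} (hr : 0 < r) :
    lorentzR f p r < ⊤ ↔ ∫⁻ l in Ioi 0, lorentzIntegrand f p r l < ⊤ :=
  ENNReal.rpow_lt_top_iff_of_pos (one_div_pos.mpr hr)

section LorentzIntegrand

variable {f : EuclideanSpace ℝ (Fin d) → ℝ} {p r l A : ℝ} {ω : ℝ≥0∞}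

lemma lorentzIntegrand_le (hp : 0 < p) (hr : 0 ≤ r) (hl : 0 < l) (hA : 0 ≤ A)
    (hD : volume {x | l < |f x|} ≤ ENNReal.ofReal A * ω) :
    lorentzIntegrand f p r l ≤ (ω ^ (1 / p)) ^ r * ENNReal.ofReal ((l * A ^ (1 / p)) ^ r / l) := by
  have hq : 0 ≤ 1 / p := by positivity
  rw [← ofReal_mul_rpow_div_ofReal ω hl hA hq hr, lorentzIntegrand]
  gcongr

lemma le_lorentzIntegrand (hp : 0 < p) (hr : 0 ≤ r) (hl : 0 < l) (hA : 0 ≤ A)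
    (hD : ENNReal.ofReal A * ω ≤ volume {x | l < |f x|}) :
    (ω ^ (1 / p)) ^ r * ENNReal.ofReal ((l * A ^ (1 / p)) ^ r / l) ≤ lorentzIntegrand f p r l := by
  have hq : 0 ≤ 1 / p := by positivity
  rw [← ofReal_mul_rpow_div_ofReal ω hl hA hq hr, lorentzIntegrand]
  gcongr

lemma le_setLIntegral_Ioo_lorentzIntegrand {T : ℝ} (hp : 0 < p) (hr : 0 ≤ r) (hT : 0 < T)
    (hA : 0 ≤ A) (hD : ∀ l ∈ Ioo (T / 2) T, ENNReal.ofReal A * ω ≤ volume {x | l < |f x|}) :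
    (ω ^ (1 / p)) ^ r * ENNReal.ofReal ((T * A ^ (1 / p) / 2) ^ r / 2)
      ≤ ∫⁻ l in Ioo (T / 2) T, lorentzIntegrand f p r l := by
  have hC : ∀ l ∈ Ioo (T / 2) T, (ω ^ (1 / p)) ^ r * ENNReal.ofReal ((T / 2 * A ^ (1 / p)) ^ r / T)
      ≤ lorentzIntegrand f p r l := by
    intro l hl
    have hl0 : 0 < l := by linarith [hl.1]
    refine le_trans ?_ (le_lorentzIntegrand hp hr hl0 hA (hD l hl))
    gcongr
    · exact hl.1.le
    · exact hl.2.le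
  calc (ω ^ (1 / p)) ^ r * ENNReal.ofReal ((T * A ^ (1 / p) / 2) ^ r / 2)
      = (ω ^ (1 / p)) ^ r * ENNReal.ofReal ((T / 2 * A ^ (1 / p)) ^ r / T)
          * volume (Ioo (T / 2) T) := by
        rw [Real.volume_Ioo, mul_assoc, ← ENNReal.ofReal_mul (by positivity)]
        congr 2
        field_simp
        ring
    _ = ∫⁻ _ in Ioo (T / 2) T,
          (ω ^ (1 / p)) ^ r * ENNReal.ofReal ((T / 2 * A ^ (1 / p)) ^ r / T) :=
        (setLIntegral_const _ _).symm
    _ ≤ ∫⁻ l in Ioo (T / 2) T, lorentzIntegrand f p r l :=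
        setLIntegral_mono' measurableSet_Ioo hC

end LorentzIntegrand

section Profile

variable {b γ l : ℝ} {x : EuclideanSpace ℝ (Fin d)}

lemma log_two_div_le_log_one_div_norm (hx : 0 < ‖x‖) (hxR : ‖x‖ ≤ (2:ℝ) ^ (-(1:ℝ)/d)) :
    Real.log 2 / d ≤ Real.log (1 / ‖x‖) := by
  calc Real.log 2 / d = Real.log (1 / (2:ℝ) ^ (-(1:ℝ)/d)) := by
        rw [one_div, ← Real.rpow_neg zero_le_two, Real.log_rpow two_pos]
        ring
    _ ≤ Real.log (1 / ‖x‖) := by gcongr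

lemma two_mul_exp_neg_le_two_rpow (hd : 0 < d) {u : ℝ} (hu : 2 * Real.log 2 ≤ u) :
    2 * exp (-u) ≤ (2:ℝ) ^ (-(1:ℝ)/d) := by
  have hdl : Real.log 2 / d ≤ Real.log 2 :=
    div_le_self (Real.log_pos one_lt_two).le (by exact_mod_cast hd : (1 : ℝ) ≤ d)
  rw [← Real.log_le_log_iff (by positivity) (by positivity),
    Real.log_mul two_ne_zero (exp_pos _).ne', Real.log_exp, Real.log_rpow two_pos,
    show -(1 : ℝ) / d * Real.log 2 = -(Real.log 2 / d) by ring]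
  linarith

lemma hfun_eq_exp (hx : 0 < ‖x‖) (hxR : ‖x‖ ≤ (2:ℝ) ^ (-(1:ℝ)/d)) :
    hfun d b γ x = exp (b * Real.log (1 / ‖x‖)) * Real.log (1 / ‖x‖) ^ (-γ) := by
  rw [hfun, if_pos ⟨hx, hxR⟩, Real.rpow_def_of_pos hx, one_div, Real.log_inv]
  ring_nf

lemma hfun_nonneg : 0 ≤ hfun d b γ x := by
  unfold hfun
  split_ifs with h
  · have : 0 ≤ Real.log (1 / ‖x‖) :=
      (by positivity : (0 : ℝ) ≤ Real.log 2 / d).trans (log_two_div_le_log_one_div_norm h.1 h.2)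
    positivity
  · exact le_rfl

lemma mem_support_of_lt_abs_hfun (hl : 0 ≤ l) (hx : l < |hfun d b γ x|) :
    0 < ‖x‖ ∧ ‖x‖ ≤ (2:ℝ) ^ (-(1:ℝ)/d) := by
  by_contra h
  simp only [hfun, if_neg h, abs_zero] at hx
  linarith

lemma setOf_lt_abs_hfun_subset_closedBall_one (hl : 0 ≤ l) :
    {x | l < |hfun d b γ x|} ⊆ closedBall 0 1 := fun x hx ↦
  mem_closedBall_zero_iff.mpr <| (mem_support_of_lt_abs_hfun hl hx).2.trans <|
    Real.rpow_le_one_of_one_le_of_nonpos one_le_two (by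
      rw [neg_div]; exact neg_nonpos.mpr (by positivity))

lemma setOf_lt_abs_hfun_subset_closedBall (hb : 0 < b) (hγ : 0 < γ)
    (hl : 1 < l * (Real.log 2 / d) ^ γ) :
    {x | l < |hfun d b γ x|} ⊆
      closedBall 0 (((Real.log (l * (Real.log 2 / d) ^ γ) / b) ^ (-γ) / l) ^ b⁻¹) := by
  have hc : 0 < Real.log 2 / d := by
    refine lt_of_le_of_ne (by positivity) fun h0 ↦ ?_
    rw [← h0, Real.zero_rpow hγ.ne', mul_zero] at hl
    exact one_pos.not_gt hl
  have hl0 : 0 < l := pos_of_mul_pos_left (one_pos.trans hl) (by positivity)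
  intro x hx
  obtain ⟨hx0, hxR⟩ := mem_support_of_lt_abs_hfun hl0.le hx
  rw [mem_ofPred_eq, abs_of_nonneg hfun_nonneg, hfun_eq_exp hx0 hxR] at hx
  have key := exp_neg_mul_lt_of_lt_exp_mul_rpow hb hγ hc
    (log_two_div_le_log_one_div_norm hx0 hxR) hl hx
  have hnorm : ‖x‖ = exp (-(b * Real.log (1 / ‖x‖))) ^ b⁻¹ := by
    rw [← Real.exp_mul, show -(b * Real.log (1 / ‖x‖)) * b⁻¹ = Real.log ‖x‖ by
      rw [one_div, Real.log_inv]; field_simp, Real.exp_log hx0]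
  rw [mem_closedBall_zero_iff, hnorm]
  exact Real.rpow_le_rpow (exp_pos _).le key.le (inv_nonneg.mpr hb.le)

lemma closedBall_diff_closedBall_subset_setOf_lt_abs_hfun (hd : 0 < d) (hb : 0 < b)
    (hγ : 0 < γ) {u : ℝ} (hu : 2 * exp (-u) ≤ (2:ℝ) ^ (-(1:ℝ)/d))
    (hl : l < exp (b * (u - Real.log 2)) * u ^ (-γ)) :
    closedBall 0 (2 * exp (-u)) \ closedBall 0 (exp (-u)) ⊆ {x | l < |hfun d b γ x|} := by
  rintro x ⟨hx2, hx1⟩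
  rw [mem_closedBall_zero_iff] at hx2
  rw [mem_closedBall_zero_iff, not_le] at hx1
  have hx0 : 0 < ‖x‖ := (exp_pos _).trans hx1
  have hxR : ‖x‖ ≤ (2:ℝ) ^ (-(1:ℝ)/d) := hx2.trans hu
  rw [mem_ofPred_eq, abs_of_nonneg hfun_nonneg, hfun_eq_exp hx0 hxR]
  have hv : Real.log (1 / ‖x‖) = -Real.log ‖x‖ := by rw [one_div, Real.log_inv]
  set v := Real.log (1 / ‖x‖)
  have hv0 : 0 < v := (by positivity : 0 < Real.log 2 / d).trans_le
    (log_two_div_le_log_one_div_norm hx0 hxR)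
  have hvu : v ≤ u := by
    have : -u ≤ Real.log ‖x‖ := (Real.le_log_iff_exp_le hx0).mpr hx1.le
    linarith
  have huv : u - Real.log 2 ≤ v := by
    have : Real.log ‖x‖ ≤ Real.log 2 - u := by
      rw [Real.log_le_iff_le_exp hx0, sub_eq_add_neg, Real.exp_add, Real.exp_log two_pos]
      exact hx2
    linarith
  refine hl.trans_le (mul_le_mul (Real.exp_le_exp.mpr (by gcongr))
    (Real.rpow_le_rpow_of_nonpos hv0 hvu (by linarith)) (Real.rpow_nonneg (hv0.le.trans hvu) _)
    (exp_pos _).le)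

end Profile

lemma lorentzIntegrand_hfun_le_rpow {b γ r l : ℝ} (hd : 0 < d) (hb : 0 < b) (hr : 0 ≤ r)
    (hl : 0 < l) :
    lorentzIntegrand (hfun d b γ) (d / b) r l
      ≤ (volume (ball (0 : EuclideanSpace ℝ (Fin d)) 1) ^ (1 / ((d : ℝ) / b))) ^ r *
          ENNReal.ofReal (l ^ (r - 1)) := by
  have hD : volume {x | l < |hfun d b γ x|}
      ≤ ENNReal.ofReal 1 * volume (ball (0 : EuclideanSpace ℝ (Fin d)) 1) := by
    refine (measure_mono (setOf_lt_abs_hfun_subset_closedBall_one hl.le)).trans_eq ?_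
    rw [volume_closedBall_zero zero_le_one, one_pow]
  refine (lorentzIntegrand_le (by positivity) hr hl zero_le_one hD).trans_eq ?_
  rw [Real.one_rpow, mul_one, Real.rpow_sub_one hl.ne']

lemma lorentzIntegrand_hfun_le_log_rpow {b γ r l : ℝ} (hd : 0 < d) (hb : 0 < b) (hγ : 0 < γ)
    (hr : 0 ≤ r) (hl : 1 < l * (Real.log 2 / d) ^ γ) :
    lorentzIntegrand (hfun d b γ) (d / b) r l
      ≤ (volume (ball (0 : EuclideanSpace ℝ (Fin d)) 1) ^ (1 / ((d : ℝ) / b))) ^ r *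
          ENNReal.ofReal
            (b ^ (γ * r) * (Real.log (l * (Real.log 2 / d) ^ γ) ^ (-(γ * r)) / l)) := by
  set c := (Real.log 2 / d) ^ γ
  have hl0 : 0 < l := pos_of_mul_pos_left (one_pos.trans hl) (by positivity)
  have hL : 0 < Real.log (l * c) := Real.log_pos hl
  set B := (Real.log (l * c) / b) ^ (-γ) / l
  have hB : 0 ≤ B := by positivity
  have hD : volume {x | l < |hfun d b γ x|}
      ≤ ENNReal.ofReal ((B ^ b⁻¹) ^ d) * volume (ball (0 : EuclideanSpace ℝ (Fin d)) 1) :=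
    (measure_mono (setOf_lt_abs_hfun_subset_closedBall hb hγ hl)).trans_eq
      (volume_closedBall_zero (by positivity))
  refine (lorentzIntegrand_le (by positivity) hr hl0 (by positivity) hD).trans_eq ?_
  rw [one_div_div, rpow_natCast_rpow_div (by positivity) hd.ne', Real.rpow_inv_rpow hB hb.ne',
    mul_div_cancel₀ _ hl0.ne', ← Real.rpow_mul (by positivity),
    Real.div_rpow hL.le hb.le, neg_mul, Real.rpow_neg hb.le]
  field_simp

theorem setLIntegral_lorentzIntegrand_hfun_lt_top {b γ r : ℝ} (hd : 0 < d) (hb : 0 < b)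
    (hγ : 0 < γ) (hr : 1 < γ * r) :
    ∫⁻ l in Ioi 0, lorentzIntegrand (hfun d b γ) (d / b) r l < ⊤ := by
  set c := (Real.log 2 / d) ^ γ
  have hc : 0 < c := by positivity
  have hr0 : 0 < r := pos_of_mul_pos_right (one_pos.trans hr) hγ.le
  have hC : (volume (ball (0 : EuclideanSpace ℝ (Fin d)) 1) ^ (1 / ((d : ℝ) / b))) ^ r ≠ ⊤ :=
    ENNReal.rpow_ne_top_of_nonneg hr0.le
      (ENNReal.rpow_ne_top_of_nonneg (by positivity) measure_ball_lt_top.ne)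
  set a := exp 1 / c
  have ha : 0 < a := by positivity
  have hac : 1 < a * c := by
    rw [div_mul_cancel₀ _ hc.ne']
    exact Real.one_lt_exp_iff.mpr one_pos
  rw [← Ioc_union_Ioi_eq_Ioi ha.le, lintegral_union measurableSet_Ioi Ioc_disjoint_Ioi_same]
  refine ENNReal.add_lt_top.mpr ⟨?_, ?_⟩
  · exact setLIntegral_lt_top_of_le_ofReal measurableSet_Ioc hC
      ((intervalIntegrable_iff_integrableOn_Ioc_of_le ha.le).mp
        (intervalIntegral.intervalIntegrable_rpow' (by linarith)))
      fun l hl ↦ lorentzIntegrand_hfun_le_rpow hd hb hr0.le hl.1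
  · exact setLIntegral_lt_top_of_le_ofReal measurableSet_Ioi hC
      ((integrableOn_Ioi_log_rpow_neg_div hc hac hr).const_mul _)
      fun l hl ↦ lorentzIntegrand_hfun_le_log_rpow hd hb hγ hr0.le
        (hac.trans (mul_lt_mul_of_pos_right hl hc))

/- With `Λ = e^{b (u - log 2)} u^{-γ}` and the annulus of volume `(2^d - 1) e^{-d u} ω`, the
constant is `Λ ((2^d - 1) e^{-d u})^{b/d} / (2 u^{-γ})`. -/
lemma le_setLIntegral_lorentzIntegrand_hfun {b γ u : ℝ} (hd : 0 < d) (hb : 0 < b) (hγ : 0 < γ)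
    (hu0 : 0 < u) (hu : 2 * exp (-u) ≤ (2:ℝ) ^ (-(1:ℝ)/d)) :
    (volume (ball (0 : EuclideanSpace ℝ (Fin d)) 1) ^ (1 / ((d : ℝ) / b))) ^ (1 / γ) *
        ENNReal.ofReal
          ((exp (-(b * Real.log 2)) * (2 ^ d - 1) ^ (b / d) / 2 * u ^ (-γ)) ^ (1 / γ) / 2)
      ≤ ∫⁻ l in Ioo (exp (b * (u - Real.log 2)) * u ^ (-γ) / 2)
          (exp (b * (u - Real.log 2)) * u ^ (-γ)),
          lorentzIntegrand (hfun d b γ) (d / b) (1 / γ) l := by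
  have h2d : (0 : ℝ) ≤ 2 ^ d - 1 := sub_nonneg.mpr (one_le_pow₀ one_le_two)
  have hA : 0 ≤ (2 ^ d - 1) * exp (-u) ^ d := by
    have := exp_pos (-u)
    positivity
  refine le_trans (le_of_eq ?_) (le_setLIntegral_Ioo_lorentzIntegrand (by positivity)
    (by positivity) (by positivity) hA fun l hl ↦
      (volume_closedBall_two_mul_diff_closedBall (exp_pos _).le).symm.trans_le
        (measure_mono (closedBall_diff_closedBall_subset_setOf_lt_abs_hfun hd hb hγ hu hl.2)))
  congr 3
  rw [one_div_div, Real.mul_rpow h2d (by positivity),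
    rpow_natCast_rpow_div (exp_pos _).le hd.ne', ← Real.exp_mul]
  have : exp (b * (u - Real.log 2)) * exp (-u * b) = exp (-(b * Real.log 2)) := by
    rw [← Real.exp_add]; ring_nf
  rw [← this]
  congr 1
  ring

theorem setLIntegral_lorentzIntegrand_hfun_eq_top {b γ : ℝ} (hd : 0 < d) (hb : 0 < b)
    (hγ : 0 < γ) :
    ∫⁻ l in Ioi 0, lorentzIntegrand (hfun d b γ) (d / b) (1 / γ) l = ⊤ := by
  set c := (2 + (1 + γ) / b) * Real.log 2
  set κ := exp (-(b * Real.log 2)) * (2 ^ d - 1) ^ (b / d) / 2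
  set C := (volume (ball (0 : EuclideanSpace ℝ (Fin d)) 1) ^ (1 / ((d : ℝ) / b))) ^ (1 / γ)
  have hc : 0 < c := by positivity
  have hc2 : 2 * Real.log 2 ≤ c := by
    simp only [c]; nlinarith [(by positivity : 0 ≤ (1 + γ) / b * Real.log 2)]
  have hκ : 0 < κ := by
    have : (1 : ℝ) < 2 ^ d := one_lt_pow₀ one_lt_two hd.ne'
    have : (0 : ℝ) < 2 ^ d - 1 := by linarith
    positivity
  have hC : C ≠ 0 := (ENNReal.rpow_pos (ENNReal.rpow_pos (measure_ball_pos _ _ one_pos)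
    measure_ball_lt_top.ne) (ENNReal.rpow_ne_top_of_nonneg (by positivity)
      measure_ball_lt_top.ne)).ne'
  have hbc : 2 * 2 ^ γ ≤ exp (b * c) := by
    have : b * c = (2 * b + (1 + γ)) * Real.log 2 := by
      simp only [c]; field_simp
    rw [← Real.rpow_one_add' zero_le_two (by positivity), Real.rpow_def_of_pos two_pos, this]
    exact Real.exp_le_exp.mpr (by nlinarith [Real.log_pos one_lt_two])
  set Λ : ℕ → ℝ := fun k ↦ exp (b * (c * (k + 1) - Real.log 2)) * (c * (k + 1)) ^ (-γ)
  have hΛ : ∀ k : ℕ, 2 * Λ k ≤ Λ (k + 1) := by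
    intro k
    have := two_mul_exp_mul_rpow_le (s := Real.log 2) hγ.le (by positivity : 0 < c * (k + 1))
      hc.le (le_mul_of_one_le_right hc.le (by simp)) hbc
    simp only [Λ]
    push_cast
    convert this using 3 <;> ring
  refine top_le_iff.mp ?_
  calc ⊤ = ∑' k : ℕ, C * ENNReal.ofReal ((κ * (c * (k + 1)) ^ (-γ)) ^ (1 / γ) / 2) :=
        (tsum_mul_ofReal_rpow_div_two_eq_top hC hκ hc hγ).symm
    _ ≤ ∑' k : ℕ, ∫⁻ l in Ioo (Λ k / 2) (Λ k), lorentzIntegrand (hfun d b γ) (d / b) (1 / γ) l :=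
        ENNReal.tsum_le_tsum fun k ↦ le_setLIntegral_lorentzIntegrand_hfun hd hb hγ
          (by positivity) (two_mul_exp_neg_le_two_rpow hd
            (hc2.trans (le_mul_of_one_le_right hc.le (by simp))))
    _ ≤ ∫⁻ l in Ioi 0, lorentzIntegrand (hfun d b γ) (d / b) (1 / γ) l :=
        tsum_setLIntegral_Ioo_le_setLIntegral_Ioi _ (fun k ↦ by positivity) hΛ

theorem stmt15_general (d : ℕ) (hd : 1 ≤ d) (b γ : ℝ) (hb1 : 0 < b)
    (hγ1 : 0 < γ) :
    (∀ r : ℝ, 1/γ < r → lorentzR (hfun d b γ) ((d:ℝ)/b) r < ⊤) ∧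
      ¬ lorentzR (hfun d b γ) ((d:ℝ)/b) (1/γ) < ⊤ := by
  refine ⟨fun r hr ↦ ?_, ?_⟩
  · have hγr : 1 < γ * r := by rwa [div_lt_iff₀ hγ1, mul_comm] at hr
    exact (lorentzR_lt_top_iff ((one_div_pos.mpr hγ1).trans hr)).mpr
      (setLIntegral_lorentzIntegrand_hfun_lt_top hd hb1 hγ1 hγr)
  · rw [lorentzR_lt_top_iff (one_div_pos.mpr hγ1),
      setLIntegral_lorentzIntegrand_hfun_eq_top hd hb1 hγ1]
    exact lt_irrefl ⊤

/-- h ∈ L^{d/b,r}(ℝ^d) for every r > 1/γ, but h ∉ L^{d/b,1/γ}(ℝ^d). -/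
theorem stmt15 (d : ℕ) (hd : 1 ≤ d) (b γ : ℝ) (hb1 : 0 < b) (hb2 : b ≤ d)
    (hγ1 : 0 < γ) (hγ2 : γ ≤ 1) :
    (∀ r : ℝ, 1/γ < r → lorentzR (hfun d b γ) ((d:ℝ)/b) r < ⊤) ∧
      ¬ lorentzR (hfun d b γ) ((d:ℝ)/b) (1/γ) < ⊤ :=
  stmt15_general d hd b γ hb1 hγ1
end
end
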